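/- arXiv:2102.10309 — 3 statements merged into one kernel-verified Lean document; each statement's English description precedes it below -/
import Mathlib

section
/- Let $\ell \ge 1$, $\alpha > 0$, and $\hat{p}_1 \ne \hat{p}_2 \in \mathbb{R}$ with $\alpha/(\ell|\hat p_1 - \hat p_2|) \ge 1/2$. Then the unique minimizer of $g(x,y) = \frac{\ell}{2}(x - \hat{p}_1)^2 + \frac{\ell}{2}(y - \hat{p}_2)^2 + \alpha|x - y|$ is the constant pair $x^* = y^* = (\hat{p}_1 + \hat{p}_2)/2$, i.e., for large regularization the jump is completely removed and both values equal the midpoint. -/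
/-!
Writing `m = (p₁ + p₂)/2`, `d = p₁ - p₂` and `t = x - y`, the identity
`(a² + b²)/2 = ((a + b)² + (a - b)²)/4` gives
`g x y - g m m = ℓ/4 ((x + y - 2m)² + t²) + (α|t| - ℓ t d / 2)`.
The bracket is nonnegative because `ℓ|d| ≤ 2α`, so `g` exceeds `g m m` by at least
a positive definite quadratic form in `(x + y - 2m, x - y)`, which vanishes only at `(m, m)`.
-/

theorem half_mul_le_mul_abs_of_mul_abs_le {ℓ α t d : ℝ} (hℓ : 0 ≤ ℓ) (hreg : ℓ * |d| ≤ 2 * α) :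
    ℓ/2 * (t * d) ≤ α * |t| :=
  calc ℓ/2 * (t * d) ≤ ℓ/2 * (|t| * |d|) := by
        rw [← abs_mul]; gcongr; exact le_abs_self _
    _ = (ℓ * |d|)/2 * |t| := by ring
    _ ≤ α * |t| := by gcongr; linarith

noncomputable def twoValueEnergy (ℓ α p₁ p₂ x y : ℝ) : ℝ :=
  ℓ/2 * (x - p₁)^2 + ℓ/2 * (y - p₂)^2 + α * |x - y|

namespace twoValueEnergy

variable {ℓ α : ℝ} (p₁ p₂ : ℝ)

theorem sub_midpoint (x y : ℝ) :
    twoValueEnergy ℓ α p₁ p₂ x y - twoValueEnergy ℓ α p₁ p₂ ((p₁ + p₂)/2) ((p₁ + p₂)/2) =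
      ℓ/4 * ((x + y - (p₁ + p₂))^2 + (x - y)^2) + (α * |x - y| - ℓ/2 * ((x - y) * (p₁ - p₂))) := by
  simp only [twoValueEnergy, sub_self, abs_zero, mul_zero]
  ring

theorem midpoint_add_le (hℓ : 0 ≤ ℓ) (hreg : ℓ * |p₁ - p₂| ≤ 2 * α) (x y : ℝ) :
    twoValueEnergy ℓ α p₁ p₂ ((p₁ + p₂)/2) ((p₁ + p₂)/2) +
        ℓ/4 * ((x + y - (p₁ + p₂))^2 + (x - y)^2) ≤ twoValueEnergy ℓ α p₁ p₂ x y := by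
  have hgap := sub_midpoint (ℓ := ℓ) (α := α) p₁ p₂ x y
  have hcoupling := half_mul_le_mul_abs_of_mul_abs_le (t := x - y) hℓ hreg
  linarith

theorem midpoint_le (hℓ : 0 ≤ ℓ) (hreg : ℓ * |p₁ - p₂| ≤ 2 * α) (x y : ℝ) :
    twoValueEnergy ℓ α p₁ p₂ ((p₁ + p₂)/2) ((p₁ + p₂)/2) ≤ twoValueEnergy ℓ α p₁ p₂ x y := by
  have hgap := midpoint_add_le p₁ p₂ hℓ hreg x y
  have hquad : 0 ≤ ℓ/4 * ((x + y - (p₁ + p₂))^2 + (x - y)^2) := by positivity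
  linarith

theorem eq_midpoint_of_le_midpoint (hℓ : 0 < ℓ) (hreg : ℓ * |p₁ - p₂| ≤ 2 * α) {x y : ℝ}
    (hle : twoValueEnergy ℓ α p₁ p₂ x y ≤
      twoValueEnergy ℓ α p₁ p₂ ((p₁ + p₂)/2) ((p₁ + p₂)/2)) :
    x = (p₁ + p₂)/2 ∧ y = (p₁ + p₂)/2 := by
  have hquad : ℓ/4 * ((x + y - (p₁ + p₂))^2 + (x - y)^2) ≤ 0 := by
    linarith [midpoint_add_le p₁ p₂ hℓ.le hreg x y]
  have hsum : (x + y - (p₁ + p₂))^2 + (x - y)^2 = 0 :=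
    le_antisymm (nonpos_of_mul_nonpos_right hquad (by positivity)) (by positivity)
  obtain ⟨hs, ht⟩ := (add_eq_zero_iff_of_nonneg (sq_nonneg _) (sq_nonneg _)).mp hsum
  rw [sq_eq_zero_iff] at hs ht
  constructor <;> linarith

end twoValueEnergy

theorem twoValue_large_alpha_minimizer_general
    (ℓ : ℝ) (hℓ : 1 ≤ ℓ) (α p1 p2 : ℝ) (hne : p1 ≠ p2)
    (hreg : 1/2 ≤ α / (ℓ * |p1 - p2|))
    (g : ℝ → ℝ → ℝ)
    (hg : ∀ x y, g x y = ℓ/2 * (x - p1)^2 + ℓ/2 * (y - p2)^2 + α * |x - y|) :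
    (∀ x y, g ((p1 + p2)/2) ((p1 + p2)/2) ≤ g x y)
    ∧ ∀ x y, (∀ u v, g x y ≤ g u v) → x = (p1 + p2)/2 ∧ y = (p1 + p2)/2 := by
  have hℓ₀ : 0 < ℓ := by linarith
  have hjump : 0 < ℓ * |p1 - p2| := by have := abs_pos.mpr (sub_ne_zero.mpr hne); positivity
  have hreg' : ℓ * |p1 - p2| ≤ 2 * α := by rw [le_div_iff₀ hjump] at hreg; linarith
  obtain rfl : g = twoValueEnergy ℓ α p1 p2 := funext₂ hg
  exact ⟨twoValueEnergy.midpoint_le p1 p2 hℓ₀.le hreg',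
    fun x y hmin => twoValueEnergy.eq_midpoint_of_le_midpoint p1 p2 hℓ₀ hreg' (hmin _ _)⟩

theorem twoValue_large_alpha_minimizer
    (ℓ : ℝ) (hℓ : 1 ≤ ℓ) (α p1 p2 : ℝ) (hα : 0 < α) (hne : p1 ≠ p2)
    (hreg : 1/2 ≤ α / (ℓ * |p1 - p2|))
    (g : ℝ → ℝ → ℝ)
    (hg : ∀ x y, g x y = ℓ/2 * (x - p1)^2 + ℓ/2 * (y - p2)^2 + α * |x - y|) :
    (∀ x y, g ((p1 + p2)/2) ((p1 + p2)/2) ≤ g x y)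
    ∧ ∀ x y, (∀ u v, g x y ≤ g u v) → x = (p1 + p2)/2 ∧ y = (p1 + p2)/2 :=
  twoValue_large_alpha_minimizer_general ℓ hℓ α p1 p2 hne hreg g hg
end

section
/- Let $h \in \mathbb{R}^n$ be monotone nondecreasing and $\alpha \ge 0$. Then the minimizer $p^*$ of the discrete 1D $\ell^2$-TV functional $F(p) = \frac{1}{2}\sum_i (p_i - h_i)^2 + \alpha\sum_{i=1}^{n-1}|p_{i+1}-p_i|$ is also monotone nondecreasing. -/
/-!
Suppose the minimizer `p` decreases across some edge, `b = p (k+1) < p k = a`. Cap every value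
left of the edge at `c₁ = max b (h k)` and raise every value right of it to `c₂ = min a (h (k+1))`.
Clamping is 1-Lipschitz, and across the edge both new values lie in `[b, a]`, so no jump of the
total variation grows. Since `h` is monotone, the clamps only move values towards the data, and
one of them moves `a` or `b` strictly, so the fidelity term strictly decreases.
-/

open Finset

lemma sq_min_sub_le {x c y : ℝ} (hyc : y ≤ c) : (min x c - y) ^ 2 ≤ (x - y) ^ 2 := by
  rcases le_total x c with hxc | hcx
  · rw [min_eq_left hxc]
  · rw [min_eq_right hcx]; nlinarith

lemma sq_min_sub_lt {x c y : ℝ} (hyc : y ≤ c) (hcx : c < x) : (min x c - y) ^ 2 < (x - y) ^ 2 := by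
  rw [min_eq_right hcx.le]; nlinarith

lemma sq_max_sub_le {x c y : ℝ} (hcy : c ≤ y) : (max x c - y) ^ 2 ≤ (x - y) ^ 2 := by
  rcases le_total x c with hxc | hcx
  · rw [max_eq_right hxc]; nlinarith
  · rw [max_eq_left hcx]

lemma sq_max_sub_lt {x c y : ℝ} (hcy : c ≤ y) (hxc : x < c) : (max x c - y) ^ 2 < (x - y) ^ 2 := by
  rw [max_eq_right hxc.le]; nlinarith

lemma abs_min_sub_min_le_abs (a b c : ℝ) : |min a c - min b c| ≤ |a - b| := by
  simpa only [sub_self, abs_zero, max_eq_left (abs_nonneg (a - b))]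
    using abs_min_sub_min_le_max a c b c

lemma abs_max_sub_min_le {a b c₁ c₂ : ℝ} (hb : b ≤ c₁) (ha : c₂ ≤ a) (hba : b ≤ a) :
    |max b c₂ - min a c₁| ≤ a - b :=
  abs_sub_le_iff.2 ⟨by linarith [max_le hba ha, le_min hba hb],
    by linarith [min_le_left a c₁, le_max_left b c₂]⟩

def discreteTV {m : ℕ} (p : Fin (m + 1) → ℝ) : ℝ :=
  ∑ i : Fin m, |p i.succ - p i.castSucc|

def splitClamp {m : ℕ} (p : Fin (m + 1) → ℝ) (k : Fin m) (c₁ c₂ : ℝ) : Fin (m + 1) → ℝ :=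
  fun i => if i ≤ k.castSucc then min (p i) c₁ else max (p i) c₂

section splitClamp

variable {m : ℕ} (p : Fin (m + 1) → ℝ) (k : Fin m) {c₁ c₂ : ℝ}

lemma splitClamp_of_le {i : Fin (m + 1)} (hi : i ≤ k.castSucc) :
    splitClamp p k c₁ c₂ i = min (p i) c₁ := if_pos hi

lemma splitClamp_of_lt {i : Fin (m + 1)} (hi : k.castSucc < i) :
    splitClamp p k c₁ c₂ i = max (p i) c₂ := if_neg hi.not_ge

lemma discreteTV_splitClamp_le (hb : p k.succ ≤ c₁) (ha : c₂ ≤ p k.castSucc)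
    (hba : p k.succ ≤ p k.castSucc) : discreteTV (splitClamp p k c₁ c₂) ≤ discreteTV p := by
  refine sum_le_sum fun e _ => ?_
  rcases lt_trichotomy e k with hek | rfl | hke
  · rw [splitClamp_of_le p k (Fin.succ_le_castSucc_iff.2 hek),
      splitClamp_of_le p k (Fin.castSucc_le_castSucc_iff.2 hek.le)]
    exact abs_min_sub_min_le_abs _ _ _
  · rw [splitClamp_of_lt p e Fin.castSucc_lt_succ, splitClamp_of_le p e le_rfl,
      abs_sub_comm (p e.succ), abs_of_nonneg (sub_nonneg.2 hba)]
    exact abs_max_sub_min_le hb ha hba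
  · rw [splitClamp_of_lt p k (Fin.castSucc_lt_castSucc_iff.2 hke |>.trans Fin.castSucc_lt_succ),
      splitClamp_of_lt p k (Fin.castSucc_lt_castSucc_iff.2 hke)]
    exact abs_max_sub_max_le_abs _ _ _

lemma sum_sq_splitClamp_sub_lt (h : Fin (m + 1) → ℝ) (hc₁ : ∀ i ≤ k.castSucc, h i ≤ c₁)
    (hc₂ : ∀ i, k.castSucc < i → c₂ ≤ h i) (hmove : c₁ < p k.castSucc ∨ p k.succ < c₂) :
    ∑ i, (splitClamp p k c₁ c₂ i - h i) ^ 2 < ∑ i, (p i - h i) ^ 2 := by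
  have hle : ∀ i, (splitClamp p k c₁ c₂ i - h i) ^ 2 ≤ (p i - h i) ^ 2 := fun i => by
    rcases le_or_gt i k.castSucc with hi | hi
    · rw [splitClamp_of_le p k hi]; exact sq_min_sub_le (hc₁ i hi)
    · rw [splitClamp_of_lt p k hi]; exact sq_max_sub_le (hc₂ i hi)
  refine sum_lt_sum (fun i _ => hle i) ?_
  rcases hmove with ha | hb
  · refine ⟨k.castSucc, mem_univ _, ?_⟩
    rw [splitClamp_of_le p k le_rfl]
    exact sq_min_sub_lt (hc₁ _ le_rfl) ha
  · have hk : k.castSucc < k.succ := Fin.castSucc_lt_succ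
    refine ⟨k.succ, mem_univ _, ?_⟩
    rw [splitClamp_of_lt p k hk]
    exact sq_max_sub_lt (hc₂ _ hk) hb

end splitClamp

lemma exists_sum_sq_sub_lt_discreteTV_le {m : ℕ} {h : Fin (m + 1) → ℝ} (hh : Monotone h)
    {p : Fin (m + 1) → ℝ} {k : Fin m} (hk : p k.succ < p k.castSucc) :
    ∃ q, ∑ i, (q i - h i) ^ 2 < ∑ i, (p i - h i) ^ 2 ∧ discreteTV q ≤ discreteTV p := by
  refine ⟨splitClamp p k (max (p k.succ) (h k.castSucc)) (min (p k.castSucc) (h k.succ)),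
    sum_sq_splitClamp_sub_lt p k h (fun i hi => (hh hi).trans (le_max_right _ _))
      (fun i hi => (min_le_right _ _).trans (hh (Fin.castSucc_lt_iff_succ_le.1 hi))) ?_,
    discreteTV_splitClamp_le p k (le_max_left _ _) (min_le_left _ _) hk.le⟩
  rcases lt_or_ge (h k.castSucc) (p k.castSucc) with ha | ha
  · exact Or.inl (max_lt hk ha)
  · exact Or.inr (lt_min hk (hk.trans_le (ha.trans (hh Fin.castSucc_lt_succ.le))))

theorem l2TV_monotone_preserving
    (n : ℕ) (h : Fin n → ℝ) (hmono : Monotone h) (α : ℝ) (hα : 0 ≤ α)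
    (F : (Fin n → ℝ) → ℝ)
    (hF : ∀ p, F p = (1/2) * ∑ i, (p i - h i)^2
        + α * ∑ i : Fin (n - 1),
            |p ⟨i.1+1, by have := i.isLt; omega⟩ - p ⟨i.1, by have := i.isLt; omega⟩|)
    (pstar : Fin n → ℝ) (hmin : ∀ p, F pstar ≤ F p) :
    Monotone pstar := by
  obtain _ | m := n
  · exact fun i => i.elim0
  refine Fin.monotone_iff_le_succ.2 fun k => le_of_not_gt fun hk => ?_
  obtain ⟨q, hfid, htv⟩ := exists_sum_sq_sub_lt_discreteTV_le hmono hk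
  -- `m + 1 - 1` reduces to `m`, and `⟨i + 1, _⟩`, `⟨i, _⟩` are `i.succ`, `i.castSucc` by `rfl`.
  have hF' : ∀ p, F p = 1 / 2 * ∑ i, (p i - h i) ^ 2 + α * discreteTV p := hF
  have hq := hmin q
  rw [hF', hF'] at hq
  linarith [mul_le_mul_of_nonneg_left htv hα]
end

section
/- Let $h \in \mathbb{R}^n$ be the signal with $h_i = \hat p_1$ for $i \le \ell$ and $h_i = \hat p_2$ for $i > \ell$ (where $n = 2\ell$), and let $p^*(\alpha)$ denote the unique minimizer of the 1D $\ell^2$-TV functional with parameter $\alpha > 0$. Then for $\alpha \ge \ell|\hat p_1 - \hat p_2|/2$, $p^*(\alpha)$ is the constant signal equal to $(\hat p_1 + \hat p_2)/2$; in particular $p^*(\alpha)$ is independent of $\alpha$ in this regime. -/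
/-!
Pair each index `i < ℓ` with its mirror `2ℓ - 1 - i`, which lies on the other side of the jump.
For one pair `(x, y)`, completing the square around the mean `c = (p̂₁ + p̂₂)/2` gives
`½(x - p̂₁)² + ½(y - p̂₂)² + (|p̂₁ - p̂₂|/2)|y - x| ≥ ½(x - c)² + ½(y - c)² + (p̂₁ - p̂₂)²/4`,
and `|y - x|` is bounded by the total variation of the signal. Summing over the `ℓ` pairs,
`α ≥ ℓ|p̂₁ - p̂₂|/2` yields `F p ≥ ½‖p - c‖² + F c` for every `p`, so a minimizer equals `c`.
-/

open Finset

noncomputable section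

def stepSignal (ℓ : ℕ) (p1 p2 : ℝ) (i : ℕ) : ℝ := if i < ℓ then p1 else p2

def totalVariation (n : ℕ) (p : ℕ → ℝ) : ℝ := ∑ i ∈ range (n - 1), |p (i + 1) - p i|

def l2TV (h : ℕ → ℝ) (n : ℕ) (α : ℝ) (p : ℕ → ℝ) : ℝ :=
  (1 / 2) * ∑ i ∈ range n, (p i - h i) ^ 2 + α * totalVariation n p

end

section StepSignal

variable {ℓ i : ℕ} {p1 p2 : ℝ}

theorem stepSignal_of_lt (hi : i < ℓ) : stepSignal ℓ p1 p2 i = p1 := if_pos hi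

theorem stepSignal_of_le (hi : ℓ ≤ i) : stepSignal ℓ p1 p2 i = p2 := if_neg hi.not_gt

theorem stepSignal_mirror (hi : i < ℓ) : stepSignal ℓ p1 p2 (2 * ℓ - 1 - i) = p2 :=
  stepSignal_of_le (by omega)

end StepSignal

theorem sum_range_two_mul_eq_sum_mirror {M : Type*} [AddCommMonoid M] (ℓ : ℕ) (f : ℕ → M) :
    ∑ i ∈ range (2 * ℓ), f i = ∑ i ∈ range ℓ, (f i + f (2 * ℓ - 1 - i)) := by
  rw [two_mul, sum_range_add, sum_add_distrib, ← sum_range_reflect (fun i => f (ℓ + i)) ℓ]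
  refine congrArg _ (sum_congr rfl fun i hi => congrArg f ?_)
  have := mem_range.1 hi
  omega

theorem abs_sub_le_totalVariation (p : ℕ → ℝ) {n a b : ℕ} (hab : a ≤ b) (hb : b < n) :
    |p b - p a| ≤ totalVariation n p := by
  calc |p b - p a| = dist (p a) (p b) := by rw [Real.dist_eq, abs_sub_comm]
    _ ≤ ∑ j ∈ Ico a b, dist (p j) (p (j + 1)) := dist_le_Ico_sum_dist p hab
    _ = ∑ j ∈ Ico a b, |p (j + 1) - p j| := by simp only [Real.dist_eq, abs_sub_comm]
    _ ≤ totalVariation n p := by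
      refine sum_le_sum_of_subset_of_nonneg (fun j hj => ?_) fun _ _ _ => abs_nonneg _
      rw [mem_Ico] at hj
      rw [mem_range]
      omega

theorem sum_abs_mirror_sub_le (ℓ : ℕ) (p : ℕ → ℝ) :
    ∑ i ∈ range ℓ, |p (2 * ℓ - 1 - i) - p i| ≤ ℓ * totalVariation (2 * ℓ) p := by
  calc ∑ i ∈ range ℓ, |p (2 * ℓ - 1 - i) - p i| ≤ ∑ _i ∈ range ℓ, totalVariation (2 * ℓ) p :=
        sum_le_sum fun i hi => by
          have := mem_range.1 hi
          exact abs_sub_le_totalVariation p (by omega) (by omega)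
    _ = ℓ * totalVariation (2 * ℓ) p := by rw [sum_const, card_range, nsmul_eq_mul]

theorem sq_sub_mean_pair_le (p1 p2 x y : ℝ) :
    (1 / 2) * (x - (p1 + p2) / 2) ^ 2 + (1 / 2) * (y - (p1 + p2) / 2) ^ 2 + (p1 - p2) ^ 2 / 4 ≤
      (1 / 2) * (x - p1) ^ 2 + (1 / 2) * (y - p2) ^ 2 + |p1 - p2| / 2 * |y - x| := by
  -- the difference of the two sides is `(|p1 - p2| |y - x| - (p1 - p2)(x - y)) / 2`
  have h := neg_abs_le ((p1 - p2) * (y - x))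
  rw [abs_mul] at h
  nlinarith

theorem half_sum_sq_sub_mean_le (ℓ : ℕ) (p1 p2 : ℝ) (p : ℕ → ℝ) :
    (1 / 2) * ∑ i ∈ range (2 * ℓ), (p i - (p1 + p2) / 2) ^ 2 + ℓ * ((p1 - p2) ^ 2 / 4) ≤
      (1 / 2) * ∑ i ∈ range (2 * ℓ), (p i - stepSignal ℓ p1 p2 i) ^ 2
        + |p1 - p2| / 2 * ∑ i ∈ range ℓ, |p (2 * ℓ - 1 - i) - p i| := by
  set c := (p1 + p2) / 2
  have hstep : ∀ i ∈ range ℓ, (p i - stepSignal ℓ p1 p2 i) ^ 2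
      + (p (2 * ℓ - 1 - i) - stepSignal ℓ p1 p2 (2 * ℓ - 1 - i)) ^ 2
      = (p i - p1) ^ 2 + (p (2 * ℓ - 1 - i) - p2) ^ 2 := by
    intro i hi
    rw [stepSignal_of_lt (mem_range.1 hi), stepSignal_mirror (mem_range.1 hi)]
  calc (1 / 2) * ∑ i ∈ range (2 * ℓ), (p i - c) ^ 2 + ℓ * ((p1 - p2) ^ 2 / 4)
      = ∑ i ∈ range ℓ, ((1 / 2) * (p i - c) ^ 2 + (1 / 2) * (p (2 * ℓ - 1 - i) - c) ^ 2
          + (p1 - p2) ^ 2 / 4) := by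
        rw [sum_range_two_mul_eq_sum_mirror, mul_sum]
        simp only [sum_add_distrib, mul_add, sum_const, card_range, nsmul_eq_mul]
    _ ≤ ∑ i ∈ range ℓ, ((1 / 2) * (p i - p1) ^ 2 + (1 / 2) * (p (2 * ℓ - 1 - i) - p2) ^ 2
          + |p1 - p2| / 2 * |p (2 * ℓ - 1 - i) - p i|) :=
        sum_le_sum fun i _ => sq_sub_mean_pair_le p1 p2 _ _
    _ = _ := by
        rw [sum_range_two_mul_eq_sum_mirror, sum_congr rfl hstep, mul_sum, mul_sum]
        simp only [sum_add_distrib, mul_add]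

theorem l2TV_stepSignal_mean (ℓ : ℕ) (p1 p2 α : ℝ) :
    l2TV (stepSignal ℓ p1 p2) (2 * ℓ) α (fun _ => (p1 + p2) / 2) = ℓ * ((p1 - p2) ^ 2 / 4) := by
  have hpair : ∀ i ∈ range ℓ, ((p1 + p2) / 2 - stepSignal ℓ p1 p2 i) ^ 2
      + ((p1 + p2) / 2 - stepSignal ℓ p1 p2 (2 * ℓ - 1 - i)) ^ 2 = (p1 - p2) ^ 2 / 2 := by
    intro i hi
    rw [stepSignal_of_lt (mem_range.1 hi), stepSignal_mirror (mem_range.1 hi)]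
    ring
  rw [l2TV, totalVariation, sum_range_two_mul_eq_sum_mirror, sum_congr rfl hpair]
  simp only [sub_self, abs_zero, sum_const_zero, mul_zero, add_zero, sum_const, card_range,
    nsmul_eq_mul]
  ring

theorem half_sum_sq_sub_mean_add_l2TV_const_le (ℓ : ℕ) {p1 p2 α : ℝ}
    (hsat : ℓ * |p1 - p2| / 2 ≤ α) (p : ℕ → ℝ) :
    (1 / 2) * ∑ i ∈ range (2 * ℓ), (p i - (p1 + p2) / 2) ^ 2
      + l2TV (stepSignal ℓ p1 p2) (2 * ℓ) α (fun _ => (p1 + p2) / 2)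
      ≤ l2TV (stepSignal ℓ p1 p2) (2 * ℓ) α p := by
  have hTV : |p1 - p2| / 2 * ∑ i ∈ range ℓ, |p (2 * ℓ - 1 - i) - p i|
      ≤ α * totalVariation (2 * ℓ) p :=
    calc |p1 - p2| / 2 * ∑ i ∈ range ℓ, |p (2 * ℓ - 1 - i) - p i|
        ≤ |p1 - p2| / 2 * (ℓ * totalVariation (2 * ℓ) p) := by
          gcongr
          exact sum_abs_mirror_sub_le ℓ p
      _ = ℓ * |p1 - p2| / 2 * totalVariation (2 * ℓ) p := by ring
      _ ≤ α * totalVariation (2 * ℓ) p := by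
          gcongr
          exact sum_nonneg fun _ _ => abs_nonneg _
  rw [l2TV_stepSignal_mean, l2TV]
  linarith [half_sum_sq_sub_mean_le ℓ p1 p2 p]

open Finset in
theorem l2TV_saturation_general
    (ℓ : ℕ) (p1 p2 α : ℝ)
    (hsat : ℓ * |p1 - p2| / 2 ≤ α)
    (h : ℕ → ℝ) (hh : ∀ i, h i = if i < ℓ then p1 else p2)
    (F : (ℕ → ℝ) → ℝ)
    (hF : ∀ p, F p = (1/2) * ∑ i ∈ range (2*ℓ), (p i - h i)^2
        + α * ∑ i ∈ range (2*ℓ - 1), |p (i+1) - p i|)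
    (pstar : ℕ → ℝ) (hmin : ∀ p, F pstar ≤ F p) :
    ∀ i < 2*ℓ, pstar i = (p1 + p2)/2 := by
  obtain rfl : h = stepSignal ℓ p1 p2 := funext hh
  obtain rfl : F = l2TV (stepSignal ℓ p1 p2) (2 * ℓ) α := funext hF
  have hbound := half_sum_sq_sub_mean_add_l2TV_const_le ℓ hsat pstar
  have hzero : ∑ i ∈ range (2 * ℓ), (pstar i - (p1 + p2) / 2) ^ 2 = 0 :=
    le_antisymm (by linarith [hmin fun _ => (p1 + p2) / 2])
      (sum_nonneg fun _ _ => sq_nonneg _)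
  intro i hi
  have hi_sq := (sum_eq_zero_iff_of_nonneg fun _ _ => sq_nonneg _).1 hzero i (mem_range.2 hi)
  exact sub_eq_zero.1 (pow_eq_zero_iff two_ne_zero |>.1 hi_sq)

open Finset in
theorem l2TV_saturation
    (ℓ : ℕ) (hℓ : 1 ≤ ℓ) (p1 p2 α : ℝ) (hα : 0 < α)
    (hsat : ℓ * |p1 - p2| / 2 ≤ α)
    (h : ℕ → ℝ) (hh : ∀ i, h i = if i < ℓ then p1 else p2)
    (F : (ℕ → ℝ) → ℝ)
    (hF : ∀ p, F p = (1/2) * ∑ i ∈ range (2*ℓ), (p i - h i)^2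
        + α * ∑ i ∈ range (2*ℓ - 1), |p (i+1) - p i|)
    (pstar : ℕ → ℝ) (hmin : ∀ p, F pstar ≤ F p) :
    ∀ i < 2*ℓ, pstar i = (p1 + p2)/2 :=
  l2TV_saturation_general ℓ p1 p2 α hsat h hh F hF pstar hmin
end
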